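/- Let np be the map from games over L5 to normal-play combinatorial games (pregames) that replaces every atom by the normal-play game 0 = { | } while keeping the tree of left and right options. Then the sequence np(G_0), np(G_1), np(G_2), … of normal-play games is strictly increasing: for every natural number n, np(G_n) < np(G_{n+1}) in normal-play combinatorial game theory. -/

import Mathlib

universe u

/-- Combinatorial games over a poset `A` of atoms: either an atomic game `[a]` for an atom
`a : A`, or a composite game `⟨L|R⟩` where `L` and `R` are nonempty families of games
(the left and right options). -/
inductive PoGame (A : Type u) : Type (u + 1) where
  | atom : A → PoGame A
  | mk : (xl xr : Type u) → (xl → PoGame A) → (xr → PoGame A) →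
      Nonempty xl → Nonempty xr → PoGame A

/-- Conway pregames, as in the older Mathlib's `SetTheory.PGame` (removed from Mathlib). -/
inductive SetTheory.PGame : Type (u + 1) where
  | mk : (α β : Type u) → (α → SetTheory.PGame) → (β → SetTheory.PGame) → SetTheory.PGame

namespace SetTheory.PGame

mutual
  /-- `PLe x y` is `x ≤ y`: no left option `x^L` has `y ≤ x^L`, no right option `y^R`
  has `y^R ≤ x` (expressed via `PLf`, the relation `⧏`). -/
  inductive PLe : PGame.{u} → PGame.{u} → Prop
    | intro (xl xr : Type u) (xL : xl → PGame.{u}) (xR : xr → PGame.{u})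
        (yl yr : Type u) (yL : yl → PGame.{u}) (yR : yr → PGame.{u})
        (hL : ∀ i, PLf (xL i) (mk yl yr yL yR))
        (hR : ∀ j, PLf (mk xl xr xL xR) (yR j)) : PLe (mk xl xr xL xR) (mk yl yr yL yR)

  /-- `PLf x y` is `x ⧏ y`: some right option `x^R ≤ y` or `x ≤` some left option `y^L`. -/
  inductive PLf : PGame.{u} → PGame.{u} → Prop
    | right (xl xr : Type u) (xL : xl → PGame.{u}) (xR : xr → PGame.{u}) (y : PGame.{u})
        (j : xr) (h : PLe (xR j) y) : PLf (mk xl xr xL xR) y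
    | left (x : PGame.{u}) (yl yr : Type u) (yL : yl → PGame.{u}) (yR : yr → PGame.{u})
        (i : yl) (h : PLe x (yL i)) : PLf x (mk yl yr yL yR)
end

instance : Zero PGame.{u} := ⟨mk PEmpty PEmpty PEmpty.elim PEmpty.elim⟩

instance : LE PGame.{u} := ⟨PLe⟩

instance : LT PGame.{u} := ⟨fun x y => x ≤ y ∧ ¬ y ≤ x⟩

end SetTheory.PGame

namespace PoGame

variable {A : Type u}

/-- `G` is an atomic game. -/
def IsAtomic : PoGame A → Prop
  | atom _ => True
  | mk _ _ _ _ _ _ => False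

/-- `G` is a left option of the game given as second argument. -/
def IsLeftOption (G : PoGame A) : PoGame A → Prop
  | atom _ => False
  | mk _ _ L _ _ _ => ∃ i, L i = G

/-- `G` is a right option of the game given as second argument. -/
def IsRightOption (G : PoGame A) : PoGame A → Prop
  | atom _ => False
  | mk _ _ _ R _ _ => ∃ j, R j = G

section Order

variable [PartialOrder A]

mutual
  /-- `Le G H` is the relation `G ≤ H` on games over the poset `A`, defined by mutual
  recursion with `Lf` (the relation `G ⊲ H`): `G ≤ H` iff every left option `G^L`
  satisfies `G^L ⊲ H`, every right option `H^R` satisfies `G ⊲ H^R`, and if `G` or `H`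
  is atomic then `G ⊲ H`. -/
  inductive Le : PoGame A → PoGame A → Prop
    | intro (G H : PoGame A)
        (hL : ∀ G', IsLeftOption G' G → Lf G' H)
        (hR : ∀ H', IsRightOption H' H → Lf G H')
        (hA : IsAtomic G ∨ IsAtomic H → Lf G H) : Le G H

  /-- `Lf G H` is the relation `G ⊲ H` on games over the poset `A`: it holds iff some
  right option `G^R` satisfies `G^R ≤ H`, or some left option `H^L` satisfies `G ≤ H^L`,
  or `G = [a]` and `H = [b]` are atomic with `a ≤ b` in `A`. -/
  inductive Lf : PoGame A → PoGame A → Prop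
    | rightOption (G H G' : PoGame A) (h : IsRightOption G' G) (hle : Le G' H) : Lf G H
    | leftOption (G H H' : PoGame A) (h : IsLeftOption H' H) (hle : Le G H') : Lf G H
    | atom (a b : A) (hab : a ≤ b) : Lf (atom a) (atom b)
end

/-- Two games are equivalent if `G ≤ H` and `H ≤ G`. -/
def GEquiv (G H : PoGame A) : Prop := Le G H ∧ Le H G

/-- `G` is locally monotone if `G ≤ G^L` for every left option `G^L` and `G^R ≤ G` for
every right option `G^R`. -/
def LocallyMonotone (G : PoGame A) : Prop :=
  (∀ G', IsLeftOption G' G → Le G G') ∧ (∀ G', IsRightOption G' G → Le G' G)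

/-- `G` is an option (left or right) of `H`. -/
def IsOption (G H : PoGame A) : Prop := IsLeftOption G H ∨ IsRightOption G H

/-- `G` is a position of `H`: `H` itself, an option of `H`, an option of an option, etc. -/
def IsPosition (G H : PoGame A) : Prop := Relation.ReflTransGen IsOption G H

/-- `G` is monotone if every position of `G` is locally monotone. -/
def Monotone (G : PoGame A) : Prop := ∀ K, IsPosition K G → LocallyMonotone K

end Order

/-- The 5-element linearly ordered set `L5 = {-3, -2, -1, 0, 1}`. -/
abbrev L5 : Type := {a : ℤ // -3 ≤ a ∧ a ≤ 1}

/-- `G` has mean `C`: an atomic game `[a]` has mean `a`, and a composite game has mean `C`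
iff every left option has mean `C + 1` and every right option has mean `C - 1`. -/
def HasMean : PoGame L5 → ℤ → Prop
  | atom a, C => (a : ℤ) = C
  | mk _ _ L R _ _, C => (∀ i, HasMean (L i) (C + 1)) ∧ (∀ j, HasMean (R j) (C - 1))

/-- The game `⟨G | H⟩` with a single left option `G` and a single right option `H`. -/
def ofPair (G H : PoGame A) : PoGame A :=
  mk PUnit PUnit (fun _ => G) (fun _ => H) ⟨PUnit.unit⟩ ⟨PUnit.unit⟩

/-- `⋆ = ⟨-1 | -3⟩`. -/
def star : PoGame L5 := ofPair (atom ⟨-1, by norm_num⟩) (atom ⟨-3, by norm_num⟩)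

/-- `M(G) = ⟨1 | G⟩`. -/
def M (G : PoGame L5) : PoGame L5 := ofPair (atom ⟨1, by norm_num⟩) G

/-- `P(G) = ⟨G | -2⟩`. -/
def P (G : PoGame L5) : PoGame L5 := ofPair G (atom ⟨-2, by norm_num⟩)

/-- `P⋆(G) = ⟨G | ⋆⟩`. -/
def Pstar (G : PoGame L5) : PoGame L5 := ofPair G star

/-- `Pn n G = P G` if `n` is odd, `P⋆ G` if `n` is even. -/
def Pn (n : ℕ) (G : PoGame L5) : PoGame L5 := if Odd n then P G else Pstar G

/-- The sequence `G_0 = [0]`, `G_{n+1} = M (Pn n (G_n))`. -/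
def Gseq : ℕ → PoGame L5
  | 0 => atom ⟨0, by norm_num⟩
  | n + 1 => M (Pn n (Gseq n))

/-- The normal-play game obtained from a game over `L5` by replacing every atom by the
normal-play game `0 = { | }`, keeping the tree of left and right options. -/
def np : PoGame L5 → SetTheory.PGame.{0}
  | atom _ => 0
  | mk xl xr L R _ _ => SetTheory.PGame.mk xl xr (fun i => np (L i)) (fun j => np (R j))

end PoGame

/-!
Write `H n = np (G_n)` and `K n = np (Pn n G_n)`, so that `H (n+1) = {0 | K n}` and
`K n = {H n | t n}`, where `t n` is `0` for odd `n` and `⋆ = {0 | 0}` for even `n`.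
Induction gives `0 ≤ H n` and `H n ≤ H (n+1)` directly. For `H n ⧏ H (n+1)` it suffices that
`K n ≤ H (n+2)`, i.e. `H n ⧏ H (n+2)` (induction hypothesis and transitivity) and
`K n ⧏ K (n+1)`; the latter is witnessed by `t n ≤ K (n+1)`, which holds precisely because `t`
alternates between `0` and `⋆`.
-/

namespace SetTheory.PGame

infix:50 " ⧏ " => PLf

variable {xl xr yl yr : Type u} {xL : xl → PGame.{u}} {xR : xr → PGame.{u}}
  {yL : yl → PGame.{u}} {yR : yr → PGame.{u}}

theorem mk_le_mk :
    mk xl xr xL xR ≤ mk yl yr yL yR ↔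
      (∀ i, xL i ⧏ mk yl yr yL yR) ∧ ∀ j, mk xl xr xL xR ⧏ yR j := by
  refine ⟨fun h => ?_, fun h => PLe.intro _ _ _ _ _ _ _ _ h.1 h.2⟩
  cases h with
  | intro _ _ _ _ _ _ _ _ hL hR => exact ⟨hL, hR⟩

theorem mk_lf_mk :
    mk xl xr xL xR ⧏ mk yl yr yL yR ↔
      (∃ j, xR j ≤ mk yl yr yL yR) ∨ ∃ i, mk xl xr xL xR ≤ yL i := by
  refine ⟨fun h => ?_, ?_⟩
  · cases h with
    | right _ _ _ _ _ j h => exact Or.inl ⟨j, h⟩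
    | left _ _ _ _ _ i h => exact Or.inr ⟨i, h⟩
  · rintro (⟨j, h⟩ | ⟨i, h⟩)
    · exact PLf.right _ _ _ _ _ j h
    · exact PLf.left _ _ _ _ _ i h

theorem lf_iff_not_le {x y : PGame.{u}} : x ⧏ y ↔ ¬ y ≤ x := by
  suffices ∀ x y : PGame.{u}, (x ⧏ y ↔ ¬ y ≤ x) ∧ (y ⧏ x ↔ ¬ x ≤ y) from (this x y).1
  intro x y
  induction x generalizing y with
  | mk xl xr xL xR ihxl ihxr =>
  induction y with
  | mk yl yr yL yR ihyl ihyr =>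
  simp only [mk_lf_mk, mk_le_mk, not_and_or, not_forall, (ihxl _ _).1, (ihxr _ _).2,
    (ihyl _).2, (ihyr _).1, not_not]
  exact ⟨or_comm, or_comm⟩

theorem moveLeft_lf_of_mk_le {y : PGame.{u}} (h : mk xl xr xL xR ≤ y) (i : xl) : xL i ⧏ y := by
  cases h with
  | intro _ _ _ _ _ _ _ _ hL _ => exact hL i

theorem lf_moveRight_of_le_mk {x : PGame.{u}} (h : x ≤ mk yl yr yL yR) (j : yr) : x ⧏ yR j := by
  cases h with
  | intro _ _ _ _ _ _ _ _ _ hR => exact hR j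

protected theorem le_refl (x : PGame.{u}) : x ≤ x := by
  induction x with
  | mk xl xr xL xR ihl ihr =>
  exact mk_le_mk.2 ⟨fun i => PLf.left _ _ _ _ _ i (ihl i), fun j => PLf.right _ _ _ _ _ j (ihr j)⟩

/-- The inductive step of transitivity: it only needs transitivity for the triples in which
`z` is replaced by a left option of `x`, or `x` by a right option of `z`. -/
theorem mk_le_mk_of_le_of_le {y : PGame.{u}} {zl zr : Type u} {zL : zl → PGame.{u}}
    {zR : zr → PGame.{u}}
    (h₁ : ∀ i, y ≤ mk zl zr zL zR → mk zl zr zL zR ≤ xL i → y ≤ xL i)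
    (h₂ : ∀ j, zR j ≤ mk xl xr xL xR → mk xl xr xL xR ≤ y → zR j ≤ y)
    (hxy : mk xl xr xL xR ≤ y) (hyz : y ≤ mk zl zr zL zR) : mk xl xr xL xR ≤ mk zl zr zL zR :=
  mk_le_mk.2
    ⟨fun i => lf_iff_not_le.2 fun h => lf_iff_not_le.1 (moveLeft_lf_of_mk_le hxy i) (h₁ i hyz h),
      fun j => lf_iff_not_le.2 fun h =>
        lf_iff_not_le.1 (lf_moveRight_of_le_mk hyz j) (h₂ j h hxy)⟩

protected theorem le_trans {x y z : PGame.{u}} : x ≤ y → y ≤ z → x ≤ z := by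
  suffices ∀ x y z : PGame.{u},
      (x ≤ y → y ≤ z → x ≤ z) ∧ (y ≤ z → z ≤ x → y ≤ x) ∧ (z ≤ x → x ≤ y → z ≤ y) from
    (this x y z).1
  intro x y z
  induction x generalizing y z with
  | mk _ _ _ _ ihxl ihxr =>
  induction y generalizing z with
  | mk _ _ _ _ ihyl ihyr =>
  induction z with
  | mk _ _ _ _ ihzl ihzr =>
  exact ⟨mk_le_mk_of_le_of_le (fun i => (ihxl i _ _).2.1) fun j => (ihzr j).2.2,
    mk_le_mk_of_le_of_le (fun i => (ihyl i _).2.2) fun j => (ihxr j _ _).1,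
    mk_le_mk_of_le_of_le (fun i => (ihzl i).1) fun j => (ihyr j _).2.1⟩

theorem lf_of_lf_of_le {x y z : PGame.{u}} (hxy : x ⧏ y) (hyz : y ≤ z) : x ⧏ z :=
  lf_iff_not_le.2 fun hzx => lf_iff_not_le.1 hxy (PGame.le_trans hyz hzx)

theorem lt_of_le_of_lf {x y : PGame.{u}} (hle : x ≤ y) (hlf : x ⧏ y) : x < y :=
  ⟨hle, lf_iff_not_le.1 hlf⟩

def ofPair (a b : PGame.{u}) : PGame.{u} := mk PUnit PUnit (fun _ => a) (fun _ => b)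

def star : PGame.{u} := ofPair 0 0

theorem lf_ofPair {x a : PGame.{u}} (b : PGame.{u}) (h : x ≤ a) : x ⧏ ofPair a b := by
  cases x
  exact PLf.left _ _ _ _ _ PUnit.unit h

theorem ofPair_lf {b y : PGame.{u}} (a : PGame.{u}) (h : b ≤ y) : ofPair a b ⧏ y :=
  PLf.right _ _ _ _ y PUnit.unit h

theorem ofPair_le_ofPair {a b c d : PGame.{u}} :
    ofPair a b ≤ ofPair c d ↔ a ⧏ ofPair c d ∧ ofPair a b ⧏ d := by
  simp only [ofPair, mk_le_mk, forall_const]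

theorem zero_le_ofPair {a b : PGame.{u}} : 0 ≤ ofPair a b ↔ 0 ⧏ b := by
  simp only [ofPair, show (0 : PGame.{u}) = mk PEmpty PEmpty PEmpty.elim PEmpty.elim from rfl,
    mk_le_mk, IsEmpty.forall_iff, forall_const, true_and]

end SetTheory.PGame

namespace PoGame

open SetTheory (PGame)

def npPnRight (n : ℕ) : PGame := if Odd n then 0 else PGame.star

theorem np_Pn (n : ℕ) (G : PoGame L5) : np (Pn n G) = PGame.ofPair (np G) (npPnRight n) := by
  unfold Pn npPnRight
  split_ifs <;> rfl

theorem np_Gseq_succ (n : ℕ) : np (Gseq (n + 1)) = PGame.ofPair 0 (np (Pn n (Gseq n))) := rfl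

theorem zero_le_np_Gseq (n : ℕ) : 0 ≤ np (Gseq n) := by
  cases n with
  | zero => exact PGame.le_refl 0
  | succ n =>
    rw [np_Gseq_succ, PGame.zero_le_ofPair, np_Pn]
    exact PGame.lf_ofPair _ (zero_le_np_Gseq n)

theorem np_Gseq_le_succ (n : ℕ) : np (Gseq n) ≤ np (Gseq (n + 1)) := by
  cases n with
  | zero => exact zero_le_np_Gseq 1
  | succ n =>
    rw [np_Gseq_succ (n + 1), np_Pn]
    exact PGame.ofPair_le_ofPair.2
      ⟨PGame.lf_ofPair _ (PGame.le_refl 0), PGame.lf_ofPair _ (PGame.le_refl _)⟩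

theorem npPnRight_le_np_Pn_succ (n : ℕ) :
    npPnRight n ≤ np (Pn (n + 1) (Gseq (n + 1))) := by
  rw [np_Pn]
  unfold npPnRight
  rcases Nat.even_or_odd n with hn | hn
  · rw [if_neg (Nat.not_odd_iff_even.2 hn), if_pos hn.add_one]
    exact PGame.ofPair_le_ofPair.2
      ⟨PGame.lf_ofPair _ (zero_le_np_Gseq (n + 1)), PGame.ofPair_lf _ (PGame.le_refl 0)⟩
  · rw [if_pos hn, if_neg (Nat.not_odd_iff_even.2 hn.add_one), PGame.zero_le_ofPair]
    exact PGame.lf_ofPair _ (PGame.le_refl 0)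

theorem np_Gseq_lf_succ (n : ℕ) : np (Gseq n) ⧏ np (Gseq (n + 1)) := by
  induction n with
  | zero => exact PGame.lf_ofPair _ (PGame.le_refl 0)
  | succ n ih =>
    have hH : np (Gseq n) ⧏ np (Gseq (n + 2)) :=
      PGame.lf_of_lf_of_le ih (np_Gseq_le_succ (n + 1))
    have hK : np (Pn n (Gseq n)) ⧏ np (Pn (n + 1) (Gseq (n + 1))) := by
      rw [np_Pn n]
      exact PGame.ofPair_lf _ (npPnRight_le_np_Pn_succ n)
    have hKH : np (Pn n (Gseq n)) ≤ np (Gseq (n + 2)) := by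
      rw [np_Pn n] at hK ⊢
      exact PGame.ofPair_le_ofPair.2 ⟨hH, hK⟩
    exact PGame.ofPair_lf _ hKH

end PoGame

open PoGame in
/-- The sequence `np (G_0), np (G_1), …` of normal-play games is strictly increasing. -/
theorem stmt_19 (n : ℕ) : np (Gseq n) < np (Gseq (n + 1)) :=
  SetTheory.PGame.lt_of_le_of_lf (np_Gseq_le_succ n) (np_Gseq_lf_succ n)
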